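/- Suppose lim_{x→a⁺} s(x) = ∞. Then (g(y) − g(w))/(ξ(y) − ξ(w)) → c(a) as (w,y) → (a,a) with a < w < y < b. If moreover the left boundary a is natural in the sense that ∫_a^{x₀} M[a,v] s(v) dv = ∞ (so ξ(w) → −∞ as w → a⁺), then for any fixed y₀ ∈ (a,b): lim_{w→a⁺} g(w)/ξ(w) = c(a) and lim_{w→a⁺} (g(y₀) − g(w))/(ξ(y₀) − ξ(w)) = c(a). -/

import Mathlib

open MeasureTheory Filter Set Topology
open scoped Classical

noncomputable section

/-- The state interval `(a, b)` where `a` is real and `b ∈ (a, ∞]`. -/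
def stInt (a : ℝ) (b : EReal) : Set ℝ := {x : ℝ | a < x ∧ (x : EReal) < b}

/-- The filter of approach to the right endpoint `b ∈ (a, ∞]`:
`atTop` when `b = ∞`, and the left-neighborhood filter of `b` otherwise. -/
def atB (b : EReal) : Filter ℝ :=
  if b = ⊤ then Filter.atTop else nhdsWithin b.toReal (Set.Iio b.toReal)

/-- The scale density `s(x) = exp(-∫_{x₀}^x 2μ/σ²)`. -/
def sDen (μ σ : ℝ → ℝ) (x₀ x : ℝ) : ℝ :=
  Real.exp (-(∫ y in x₀..x, 2 * μ y / (σ y) ^ 2))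

/-- The speed density `m(x) = 2/(σ(x)² s(x))`. -/
def mDen (μ σ : ℝ → ℝ) (x₀ x : ℝ) : ℝ :=
  2 / ((σ x) ^ 2 * sDen μ σ x₀ x)

/-- `M[a,x] = ∫_a^x m(u) du`. -/
def Mab (μ σ : ℝ → ℝ) (x₀ a x : ℝ) : ℝ :=
  ∫ u in Set.Ioo a x, mDen μ σ x₀ u

/-- The time potential `ξ(x) = ∫_{x₀}^x M[a,v] s(v) dv`. -/
def xiF (μ σ : ℝ → ℝ) (x₀ a x : ℝ) : ℝ :=
  ∫ v in x₀..x, Mab μ σ x₀ a v * sDen μ σ x₀ v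

/-- The running reward potential `g(x) = ∫_{x₀}^x (∫_a^v c(u) m(u) du) s(v) dv`. -/
def gF (μ σ c : ℝ → ℝ) (x₀ a x : ℝ) : ℝ :=
  ∫ v in x₀..x, (∫ u in Set.Ioo a v, c u * mDen μ σ x₀ u) * sDen μ σ x₀ v

/-- `h(x) = (∫_a^x (γ c(u) + p μ(u)) m(u) du) / M[a,x]`. -/
def hF (μ σ c : ℝ → ℝ) (x₀ a p γ x : ℝ) : ℝ :=
  (∫ u in Set.Ioo a x, (γ * c u + p * μ u) * mDen μ σ x₀ u) / Mab μ σ x₀ a x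

/-- The long-term average reward `F(w,y)` of the `(w,y)`-impulse policy. -/
def FF (μ σ c : ℝ → ℝ) (x₀ a p K γ w y : ℝ) : ℝ :=
  (p * (y - w) - K + γ * (gF μ σ c x₀ a y - gF μ σ c x₀ a w)) /
    (xiF μ σ x₀ a y - xiF μ σ x₀ a w)

/-- `c̄(b)`: equals `⟨c,π⟩` when `M[a,b] < ∞` and the boundary value `c(b)` otherwise. -/
def cbar (μ σ c : ℝ → ℝ) (x₀ a : ℝ) (b : EReal) (cb : ℝ) : ℝ :=
  if MeasureTheory.IntegrableOn (mDen μ σ x₀) (stInt a b) MeasureTheory.volume then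
    (∫ u in stInt a b, c u * mDen μ σ x₀ u) / (∫ u in stInt a b, mDen μ σ x₀ u)
  else cb

/-! For `a < v ≤ δ`, monotonicity of `c` squeezes `∫_a^v c m` between `c(a) M[a,v]` and
`c(δ) M[a,v]`; integrating against `s` over `[w, y] ⊆ (a, δ]` squeezes the chord ratio
`(g(y) - g(w)) / (ξ(y) - ξ(w))` between `c(a)` and `c(δ)`, and `c(δ) → c(a)` as `δ → a`.
For a fixed right end `y₀`, split the chord at a point `δ` near `a`: the ratio over `[w, δ]` is
already close to `c(a)`, and the contribution of `[δ, y₀]` is a fixed quantity, negligible once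
`ξ(y₀) - ξ(w) → ∞`. -/

section ChordRatio

variable {G Ξ : ℝ → ℝ} {a l : ℝ}

theorem abs_div_sub_lt_iff_of_pos {N D e : ℝ} (hD : 0 < D) :
    |N / D - l| < e ↔ |N - l * D| < e * D := by
  rw [div_sub' hD.ne', abs_div, abs_of_pos hD, div_lt_iff₀ hD, mul_comm D]

theorem tendsto_chord_ratio_of_mem_Icc {C : ℝ → ℝ} (hC : Tendsto C (𝓝[>] a) (𝓝 l))
    (hbound : ∀ᶠ δ in 𝓝[>] a, ∀ w y, a < w → w < y → y ≤ δ →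
      (G y - G w) / (Ξ y - Ξ w) ∈ Icc l (C δ)) :
    Tendsto (fun q : ℝ × ℝ => (G q.2 - G q.1) / (Ξ q.2 - Ξ q.1))
      ((𝓝[>] a ×ˢ 𝓝[>] a) ⊓ 𝓟 {q | q.1 < q.2}) (𝓝 l) := by
  have hpairs : ∀ δ, a < δ → (∀ w y, a < w → w < y → y ≤ δ →
      (G y - G w) / (Ξ y - Ξ w) ∈ Icc l (C δ)) →
      ∀ᶠ q : ℝ × ℝ in (𝓝[>] a ×ˢ 𝓝[>] a) ⊓ 𝓟 {q | q.1 < q.2},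
        (G q.2 - G q.1) / (Ξ q.2 - Ξ q.1) ∈ Icc l (C δ) := by
    intro δ hδ hbδ
    rw [eventually_inf_principal]
    filter_upwards [prod_mem_prod (Ioo_mem_nhdsGT hδ) (Ioo_mem_nhdsGT hδ)] with q hq hlt
    exact hbδ q.1 q.2 hq.1.1 hlt hq.2.2.le
  refine tendsto_order.2 ⟨fun l' hl' => ?_, fun u hu => ?_⟩
  · obtain ⟨δ, hδ, hbδ⟩ := (eventually_mem_nhdsWithin.and hbound).exists
    exact (hpairs δ hδ hbδ).mono fun q hq => hl'.trans_le hq.1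
  · obtain ⟨δ, hδ, hbδ, hCδ⟩ :=
      (eventually_mem_nhdsWithin.and (hbound.and (hC (Iio_mem_nhds hu)))).exists
    exact (hpairs δ hδ hbδ).mono fun q hq => hq.2.trans_lt hCδ

theorem tendsto_chord_ratio_fixed_right
    (hpair : Tendsto (fun q : ℝ × ℝ => (G q.2 - G q.1) / (Ξ q.2 - Ξ q.1))
      ((𝓝[>] a ×ˢ 𝓝[>] a) ⊓ 𝓟 {q | q.1 < q.2}) (𝓝 l))
    {y₀ : ℝ} (hy₀ : a < y₀) (hΞ : StrictMonoOn Ξ (Ioc a y₀))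
    (hbot : Tendsto Ξ (𝓝[>] a) atBot) :
    Tendsto (fun w => (G y₀ - G w) / (Ξ y₀ - Ξ w)) (𝓝[>] a) (𝓝 l) := by
  rw [Metric.tendsto_nhds]
  intro ε hε
  have hclose := Metric.tendsto_nhds.1 hpair (ε / 2) (half_pos hε)
  rw [eventually_inf_principal, eventually_prod_iff] at hclose
  obtain ⟨pw, hpw, pδ, hpδ, hclose⟩ := hclose
  obtain ⟨δ, hδ, hδy₀⟩ := (hpδ.and (Ioo_mem_nhdsGT hy₀)).exists
  set K := G y₀ - G δ - l * (Ξ y₀ - Ξ δ) with hK_def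
  filter_upwards [hpw, Ioo_mem_nhdsGT hδy₀.1,
    hbot.eventually (eventually_lt_atBot (Ξ y₀ - 2 * |K| / ε))] with w hw hwδ hwfar
  have hΞwδ : Ξ w < Ξ δ := hΞ ⟨hwδ.1, hwδ.2.le.trans hδy₀.2.le⟩ ⟨hδy₀.1, hδy₀.2.le⟩ hwδ.2
  have hΞδy₀ : Ξ δ ≤ Ξ y₀ :=
    hΞ.monotoneOn ⟨hδy₀.1, hδy₀.2.le⟩ ⟨hδy₀.1.trans hδy₀.2, le_rfl⟩ hδy₀.2.le
  have hnear : |G δ - G w - l * (Ξ δ - Ξ w)| < ε / 2 * (Ξ δ - Ξ w) :=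
    (abs_div_sub_lt_iff_of_pos (sub_pos.2 hΞwδ)).1 (hclose hw hδ hwδ.2)
  have hK : |K| < ε / 2 * (Ξ y₀ - Ξ w) := by
    rw [lt_sub_iff_add_lt, ← lt_sub_iff_add_lt', div_lt_iff₀ hε] at hwfar
    linarith
  rw [Real.dist_eq, abs_div_sub_lt_iff_of_pos (by linarith)]
  calc |G y₀ - G w - l * (Ξ y₀ - Ξ w)| = |(G δ - G w - l * (Ξ δ - Ξ w)) + K| := by
        rw [hK_def]; ring_nf
    _ ≤ |G δ - G w - l * (Ξ δ - Ξ w)| + |K| := abs_add_le _ _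
    _ < ε * (Ξ y₀ - Ξ w) := by nlinarith

end ChordRatio

theorem MonotoneOn.le_of_tendsto_nhdsGT {f : ℝ → ℝ} {a l x : ℝ} (hf : MonotoneOn f (Ioc a x))
    (hl : Tendsto f (𝓝[>] a) (𝓝 l)) (hx : a < x) : l ≤ f x :=
  le_of_tendsto hl <| by
    filter_upwards [Ioo_mem_nhdsGT hx] with t ht using hf ⟨ht.1, ht.2.le⟩ ⟨hx, le_rfl⟩ ht.2.le

theorem setIntegral_mul_mem_Icc {X : Type*} [MeasurableSpace X] {ν : Measure X} {s : Set X}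
    (hs : MeasurableSet s) {f g : X → ℝ} {lo hi : ℝ} (hg : IntegrableOn g s ν)
    (hfg : IntegrableOn (fun u => f u * g u) s ν) (hf : ∀ u ∈ s, f u ∈ Icc lo hi)
    (hg0 : ∀ u ∈ s, 0 ≤ g u) :
    ∫ u in s, f u * g u ∂ν ∈ Icc (lo * ∫ u in s, g u ∂ν) (hi * ∫ u in s, g u ∂ν) := by
  rw [← integral_const_mul, ← integral_const_mul]
  exact ⟨setIntegral_mono_on (hg.const_mul lo) hfg hs fun u hu =>
      mul_le_mul_of_nonneg_right (hf u hu).1 (hg0 u hu),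
    setIntegral_mono_on hfg (hg.const_mul hi) hs fun u hu =>
      mul_le_mul_of_nonneg_right (hf u hu).2 (hg0 u hu)⟩

theorem intervalIntegral_div_mem_Icc {F H : ℝ → ℝ} {w y lo hi : ℝ} (hwy : w ≤ y)
    (hF : IntervalIntegrable F volume w y) (hH : IntervalIntegrable H volume w y)
    (hFpos : 0 < ∫ v in w..y, F v) (hbound : ∀ v ∈ Icc w y, H v ∈ Icc (lo * F v) (hi * F v)) :
    (∫ v in w..y, H v) / (∫ v in w..y, F v) ∈ Icc lo hi := by
  rw [mem_Icc, le_div_iff₀ hFpos, div_le_iff₀ hFpos, ← intervalIntegral.integral_const_mul,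
    ← intervalIntegral.integral_const_mul]
  exact ⟨intervalIntegral.integral_mono_on hwy (hF.const_mul lo) hH fun v hv => (hbound v hv).1,
    intervalIntegral.integral_mono_on hwy hH (hF.const_mul hi) fun v hv => (hbound v hv).2⟩

theorem integrableOn_Ioo_mul_of_monotoneOn {f g : ℝ → ℝ} {a x : ℝ} (hf : MonotoneOn f (Ioc a x))
    (hf0 : ∀ u ∈ Ioo a x, 0 ≤ f u) (hg : IntegrableOn g (Ioo a x)) :
    IntegrableOn (fun u => f u * g u) (Ioo a x) := by
  refine Integrable.mono' (hg.norm.const_mul (f x))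
    (((aemeasurable_restrict_of_monotoneOn measurableSet_Ioo
      (hf.mono Ioo_subset_Ioc_self)).aestronglyMeasurable).mul hg.aestronglyMeasurable) ?_
  filter_upwards [ae_restrict_mem measurableSet_Ioo] with u hu
  rw [norm_mul, Real.norm_of_nonneg (hf0 u hu)]
  exact mul_le_mul_of_nonneg_right (hf ⟨hu.1, hu.2.le⟩ ⟨hu.1.trans hu.2, le_rfl⟩ hu.2.le)
    (norm_nonneg _)

theorem continuousOn_primitive_of_isOpen {f : ℝ → ℝ} {U : Set ℝ} (hU : IsOpen U)
    (hUc : U.OrdConnected) (hf : ContinuousOn f U) {x₀ : ℝ} (hx₀ : x₀ ∈ U) :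
    ContinuousOn (fun x => ∫ t in x₀..x, f t) U := fun x hx =>
  (intervalIntegral.integral_hasDerivAt_right
    (hf.mono (hUc.uIcc_subset hx₀ hx)).intervalIntegrable
    (hf.stronglyMeasurableAtFilter hU x hx)
    (hf.continuousAt (hU.mem_nhds hx))).continuousAt.continuousWithinAt

section Diffusion

variable {μ σ c : ℝ → ℝ} {x₀ a : ℝ} {b : EReal}

theorem ordConnected_stInt : (stInt a b).OrdConnected :=
  ⟨fun _ hx _ hy _ hz => ⟨hx.1.trans_le hz.1, (EReal.coe_le_coe_iff.2 hz.2).trans_lt hy.2⟩⟩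

theorem isOpen_stInt : IsOpen (stInt a b) :=
  isOpen_Ioi.inter (isOpen_Iio.preimage continuous_coe_real_ereal)

theorem Ioc_subset_stInt {x : ℝ} (hx : x ∈ stInt a b) : Ioc a x ⊆ stInt a b :=
  fun _ hu => ⟨hu.1, (EReal.coe_le_coe_iff.2 hu.2).trans_lt hx.2⟩

theorem continuousOn_sDen (hx₀ : x₀ ∈ stInt a b) (hμ : ContinuousOn μ (stInt a b))
    (hσ : ContinuousOn σ (stInt a b)) (hσpos : ∀ x ∈ stInt a b, 0 < σ x ^ 2) :
    ContinuousOn (sDen μ σ x₀) (stInt a b) :=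
  Real.continuous_exp.comp_continuousOn
    (continuousOn_primitive_of_isOpen isOpen_stInt ordConnected_stInt
      ((continuousOn_const.mul hμ).div (hσ.pow 2) fun x hx => (hσpos x hx).ne') hx₀).neg

theorem sDen_pos (x : ℝ) : 0 < sDen μ σ x₀ x := Real.exp_pos _

theorem mDen_pos {x : ℝ} (hσx : 0 < σ x ^ 2) : 0 < mDen μ σ x₀ x :=
  div_pos two_pos (mul_pos hσx (sDen_pos x))

theorem monotoneOn_setIntegral_Ioo {f : ℝ → ℝ}
    (hf : ∀ x ∈ stInt a b, IntegrableOn f (Ioo a x)) (hf0 : ∀ x ∈ stInt a b, 0 ≤ f x) :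
    MonotoneOn (fun x => ∫ u in Ioo a x, f u) (stInt a b) := fun _ _ y hy hxy =>
  setIntegral_mono_set (hf y hy)
    ((ae_restrict_mem measurableSet_Ioo).mono fun u hu =>
      hf0 u (Ioc_subset_stInt hy (Ioo_subset_Ioc_self hu)))
    (Ioo_subset_Ioo_right hxy).eventuallyLE

theorem Mab_pos (hσpos : ∀ x ∈ stInt a b, 0 < σ x ^ 2)
    (hMfin : ∀ x ∈ stInt a b, IntegrableOn (mDen μ σ x₀) (Ioo a x)) {x : ℝ}
    (hx : x ∈ stInt a b) : 0 < Mab μ σ x₀ a x := by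
  have hmpos : ∀ u ∈ Ioo a x, 0 < mDen μ σ x₀ u := fun u hu =>
    mDen_pos (hσpos u (Ioc_subset_stInt hx (Ioo_subset_Ioc_self hu)))
  rw [Mab, setIntegral_pos_iff_support_of_nonneg_ae
    ((ae_restrict_mem measurableSet_Ioo).mono fun u hu => (hmpos u hu).le) (hMfin x hx)]
  exact ((Measure.measure_Ioo_pos _).2 hx.1).trans_le
    (measure_mono fun u hu => ⟨(hmpos u hu).ne', hu⟩)

theorem intervalIntegrable_mul_sDen (hs : ContinuousOn (sDen μ σ x₀) (stInt a b))
    {f : ℝ → ℝ} (hf : MonotoneOn f (stInt a b)) {p q : ℝ} (hp : p ∈ stInt a b)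
    (hq : q ∈ stInt a b) : IntervalIntegrable (fun v => f v * sDen μ σ x₀ v) volume p q :=
  have hpq := ordConnected_stInt.uIcc_subset hp hq
  (hf.mono hpq).intervalIntegrable.mul_continuousOn (hs.mono hpq)

theorem monotoneOn_Mab (hσpos : ∀ x ∈ stInt a b, 0 < σ x ^ 2)
    (hMfin : ∀ x ∈ stInt a b, IntegrableOn (mDen μ σ x₀) (Ioo a x)) :
    MonotoneOn (Mab μ σ x₀ a) (stInt a b) :=
  monotoneOn_setIntegral_Ioo hMfin fun x hx => (mDen_pos (hσpos x hx)).le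

theorem xiF_sub_xiF (hx₀ : x₀ ∈ stInt a b) (hs : ContinuousOn (sDen μ σ x₀) (stInt a b))
    (hσpos : ∀ x ∈ stInt a b, 0 < σ x ^ 2)
    (hMfin : ∀ x ∈ stInt a b, IntegrableOn (mDen μ σ x₀) (Ioo a x)) {w y : ℝ}
    (hw : w ∈ stInt a b) (hy : y ∈ stInt a b) :
    xiF μ σ x₀ a y - xiF μ σ x₀ a w = ∫ v in w..y, Mab μ σ x₀ a v * sDen μ σ x₀ v :=
  intervalIntegral.integral_interval_sub_left
    (intervalIntegrable_mul_sDen hs (monotoneOn_Mab hσpos hMfin) hx₀ hy)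
    (intervalIntegrable_mul_sDen hs (monotoneOn_Mab hσpos hMfin) hx₀ hw)

theorem strictMonoOn_xiF (hx₀ : x₀ ∈ stInt a b) (hs : ContinuousOn (sDen μ σ x₀) (stInt a b))
    (hσpos : ∀ x ∈ stInt a b, 0 < σ x ^ 2)
    (hMfin : ∀ x ∈ stInt a b, IntegrableOn (mDen μ σ x₀) (Ioo a x)) :
    StrictMonoOn (xiF μ σ x₀ a) (stInt a b) := by
  intro w hw y hy hwy
  rw [← sub_pos, xiF_sub_xiF hx₀ hs hσpos hMfin hw hy]
  refine intervalIntegral.intervalIntegral_pos_of_pos_on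
    (intervalIntegrable_mul_sDen hs (monotoneOn_Mab hσpos hMfin) hw hy) (fun v hv => ?_) hwy
  exact mul_pos (Mab_pos hσpos hMfin (ordConnected_stInt.out hw hy (Ioo_subset_Icc_self hv)))
    (sDen_pos v)

theorem gF_chord_div_xiF_chord_mem_Icc (hx₀ : x₀ ∈ stInt a b)
    (hs : ContinuousOn (sDen μ σ x₀) (stInt a b)) (hσpos : ∀ x ∈ stInt a b, 0 < σ x ^ 2)
    (hMfin : ∀ x ∈ stInt a b, IntegrableOn (mDen μ σ x₀) (Ioo a x))
    (hcnn : ∀ x ∈ stInt a b, 0 ≤ c x) (hcmono : MonotoneOn c (stInt a b)) {ca : ℝ}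
    (hca_le : ∀ x ∈ stInt a b, ca ≤ c x) {w y δ : ℝ} (hw : a < w) (hwy : w < y) (hyδ : y ≤ δ)
    (hδ : δ ∈ stInt a b) :
    (gF μ σ c x₀ a y - gF μ σ c x₀ a w) / (xiF μ σ x₀ a y - xiF μ σ x₀ a w) ∈ Icc ca (c δ) := by
  have hyS : y ∈ stInt a b := Ioc_subset_stInt hδ ⟨hw.trans hwy, hyδ⟩
  have hwS : w ∈ stInt a b := Ioc_subset_stInt hδ ⟨hw, hwy.le.trans hyδ⟩
  have hm0 : ∀ x ∈ stInt a b, 0 ≤ mDen μ σ x₀ x := fun x hx => (mDen_pos (hσpos x hx)).le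
  have hcm : ∀ x ∈ stInt a b, IntegrableOn (fun u => c u * mDen μ σ x₀ u) (Ioo a x) :=
    fun x hx => integrableOn_Ioo_mul_of_monotoneOn (hcmono.mono (Ioc_subset_stInt hx))
      (fun u hu => hcnn u (Ioc_subset_stInt hx (Ioo_subset_Ioc_self hu))) (hMfin x hx)
  have hI := monotoneOn_setIntegral_Ioo hcm fun x hx => mul_nonneg (hcnn x hx) (hm0 x hx)
  have hξpos := sub_pos.2 (strictMonoOn_xiF hx₀ hs hσpos hMfin hwS hyS hwy)
  rw [xiF_sub_xiF hx₀ hs hσpos hMfin hwS hyS] at hξpos ⊢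
  rw [gF, gF, intervalIntegral.integral_interval_sub_left
    (intervalIntegrable_mul_sDen hs hI hx₀ hyS) (intervalIntegrable_mul_sDen hs hI hx₀ hwS)]
  refine intervalIntegral_div_mem_Icc hwy.le
    (intervalIntegrable_mul_sDen hs (monotoneOn_Mab hσpos hMfin) hwS hyS)
    (intervalIntegrable_mul_sDen hs hI hwS hyS) hξpos fun v hv => ?_
  have hvS : v ∈ stInt a b := ordConnected_stInt.out hwS hyS hv
  have hsub : ∀ u ∈ Ioo a v, u ∈ stInt a b :=
    fun u hu => Ioc_subset_stInt hvS (Ioo_subset_Ioc_self hu)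
  have hIv := setIntegral_mul_mem_Icc measurableSet_Ioo (hMfin v hvS) (hcm v hvS)
    (fun u hu => ⟨hca_le u (hsub u hu), hcmono (hsub u hu) hδ (hu.2.le.trans (hv.2.trans hyδ))⟩)
    (fun u hu => hm0 u (hsub u hu))
  rw [mem_Icc, ← mul_assoc, ← mul_assoc]
  exact ⟨mul_le_mul_of_nonneg_right hIv.1 (sDen_pos v).le,
    mul_le_mul_of_nonneg_right hIv.2 (sDen_pos v).le⟩

end Diffusion

theorem statement9_general (a : ℝ) (b : EReal)
    (μ σ : ℝ → ℝ) (x₀ : ℝ) (hx₀ : x₀ ∈ stInt a b)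
    (hμcont : ContinuousOn μ (stInt a b)) (hσcont : ContinuousOn σ (stInt a b))
    (hσpos : ∀ x ∈ stInt a b, 0 < (σ x) ^ 2)
    (hMfin : ∀ x ∈ stInt a b, IntegrableOn (mDen μ σ x₀) (Set.Ioo a x))
    (c : ℝ → ℝ)
    (hcnn : ∀ x ∈ stInt a b, 0 ≤ c x) (hcmono : MonotoneOn c (stInt a b))
    (ca : ℝ) (hca : Tendsto c (𝓝[>] a) (𝓝 ca))
    :
    Tendsto (fun q : ℝ × ℝ =>
        (gF μ σ c x₀ a q.2 - gF μ σ c x₀ a q.1) / (xiF μ σ x₀ a q.2 - xiF μ σ x₀ a q.1))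
      (((𝓝[>] a) ×ˢ (𝓝[>] a)) ⊓ 𝓟 {q : ℝ × ℝ | q.1 < q.2 ∧ (q.2 : EReal) < b}) (𝓝 ca) ∧
    (Tendsto (xiF μ σ x₀ a) (𝓝[>] a) atBot →
      ∀ y₀ ∈ stInt a b,
        Tendsto (fun w => gF μ σ c x₀ a w / xiF μ σ x₀ a w) (𝓝[>] a) (𝓝 ca) ∧
        Tendsto (fun w => (gF μ σ c x₀ a y₀ - gF μ σ c x₀ a w) /
            (xiF μ σ x₀ a y₀ - xiF μ σ x₀ a w)) (𝓝[>] a) (𝓝 ca)) := by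
  have hs := continuousOn_sDen hx₀ hμcont hσcont hσpos
  have hca_le : ∀ x ∈ stInt a b, ca ≤ c x := fun x hx =>
    (hcmono.mono (Ioc_subset_stInt hx)).le_of_tendsto_nhdsGT hca hx.1
  have hpair := tendsto_chord_ratio_of_mem_Icc (G := gF μ σ c x₀ a) (Ξ := xiF μ σ x₀ a) hca <| by
    filter_upwards [Ioo_mem_nhdsGT hx₀.1] with δ hδ w y hw hwy hyδ using
      gF_chord_div_xiF_chord_mem_Icc hx₀ hs hσpos hMfin hcnn hcmono hca_le hw hwy hyδ
        (Ioc_subset_stInt hx₀ (Ioo_subset_Ioc_self hδ))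
  refine ⟨hpair.mono_left (inf_le_inf_left _ (principal_mono.2 fun q hq => hq.1)),
    fun hbot y₀ hy₀ => ?_⟩
  have hfixed : ∀ y ∈ stInt a b, Tendsto (fun w => (gF μ σ c x₀ a y - gF μ σ c x₀ a w) /
      (xiF μ σ x₀ a y - xiF μ σ x₀ a w)) (𝓝[>] a) (𝓝 ca) := fun y hy =>
    tendsto_chord_ratio_fixed_right hpair hy.1
      ((strictMonoOn_xiF hx₀ hs hσpos hMfin).mono (Ioc_subset_stInt hy)) hbot
  refine ⟨(hfixed x₀ hx₀).congr fun w => ?_, hfixed y₀ hy₀⟩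
  simp only [gF, xiF, intervalIntegral.integral_same, zero_sub, neg_div_neg_eq]

theorem statement9    (a : ℝ) (b : EReal) (hab : (a : EReal) < b)
    (μ σ : ℝ → ℝ) (x₀ : ℝ) (hx₀ : x₀ ∈ stInt a b)
    (hμcont : ContinuousOn μ (stInt a b)) (hσcont : ContinuousOn σ (stInt a b))
    (hσpos : ∀ x ∈ stInt a b, 0 < (σ x) ^ 2)
    (hMfin : ∀ x ∈ stInt a b, IntegrableOn (mDen μ σ x₀) (Set.Ioo a x))
    (hsa : Tendsto (sDen μ σ x₀) (𝓝[>] a) atTop)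
    (c : ℝ → ℝ) (hccont : ContinuousOn c (stInt a b))
    (hcnn : ∀ x ∈ stInt a b, 0 ≤ c x) (hcmono : MonotoneOn c (stInt a b))
    (ca cb : ℝ) (hca : Tendsto c (𝓝[>] a) (𝓝 ca)) (hcb : Tendsto c (atB b) (𝓝 cb))
    (hca0 : 0 ≤ ca) (hcacb : ca < cb)
    :
    Tendsto (fun q : ℝ × ℝ =>
        (gF μ σ c x₀ a q.2 - gF μ σ c x₀ a q.1) / (xiF μ σ x₀ a q.2 - xiF μ σ x₀ a q.1))
      (((𝓝[>] a) ×ˢ (𝓝[>] a)) ⊓ 𝓟 {q : ℝ × ℝ | q.1 < q.2 ∧ (q.2 : EReal) < b}) (𝓝 ca) ∧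
    (Tendsto (xiF μ σ x₀ a) (𝓝[>] a) atBot →
      ∀ y₀ ∈ stInt a b,
        Tendsto (fun w => gF μ σ c x₀ a w / xiF μ σ x₀ a w) (𝓝[>] a) (𝓝 ca) ∧
        Tendsto (fun w => (gF μ σ c x₀ a y₀ - gF μ σ c x₀ a w) /
            (xiF μ σ x₀ a y₀ - xiF μ σ x₀ a w)) (𝓝[>] a) (𝓝 ca)) :=
  statement9_general a b μ σ x₀ hx₀ hμcont hσcont hσpos hMfin c hcnn hcmono ca hca
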